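/- Let Γ be a free ℤ-module of finite rank with a ℤ-valued symmetric bilinear form ⟨·,·⟩, let w ∈ Γ be a characteristic vector (i.e. ⟨v,v⟩ ≡ ⟨v,w⟩ mod 2 for all v ∈ Γ), let c ∈ Γ and f, g ∈ Γ_ℝ. Then for all τ in the complex upper half-plane ℍ and all x ∈ Γ_ℂ: Θ^{f,g}_{Γ,c}(τ+1, x) = e^{πi(3⟨c,c⟩/4 − ⟨c,w⟩/2)} · Θ^{f,g}_{Γ,c}(τ, x + (w−c)/2). -/
import Mathlib


/-- The bilinear form on `ι → R` associated to an integer matrix `M`. -/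
def bilin {ι : Type*} [Fintype ι] {R : Type*} [CommRing R] (M : Matrix ι ι ℤ)
    (v w : ι → R) : R :=
  ∑ i, ∑ j, (M i j : R) * v i * w j

/-- `μ(t) = 1` if `t ≥ 0` and `μ(t) = 0` otherwise (as a complex number). -/
noncomputable def charFun (t : ℝ) : ℂ := if 0 ≤ t then 1 else 0

/-- The theta function `Θ^{f,g}_{Γ,c}(τ,x)` of the lattice `Γ = ι → ℤ` with bilinear
form given by `M`. -/
noncomputable def latticeTheta {ι : Type*} [Fintype ι] (M : Matrix ι ι ℤ)
    (f g : ι → ℝ) (c : ι → ℤ) (τ : ℂ) (x : ι → ℂ) : ℂ :=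
  ∑' γ : ι → ℤ,
    (charFun (bilin M (fun i => (γ i : ℝ) + (c i : ℝ) / 2) f)
      - charFun (bilin M (fun i => (γ i : ℝ) + (c i : ℝ) / 2) g)) *
    Complex.exp (Real.pi * Complex.I * τ *
      bilin M (fun i => (γ i : ℂ) + (c i : ℂ) / 2) (fun i => (γ i : ℂ) + (c i : ℂ) / 2)) *
    Complex.exp (2 * Real.pi * Complex.I *
      bilin M (fun i => (γ i : ℂ) + (c i : ℂ) / 2) x)

private lemma bilin_half_expand {ι : Type} [Fintype ι] (M : Matrix ι ι ℤ) (γ c : ι → ℤ) :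
    bilin M (fun i => (γ i : ℂ) + (c i : ℂ) / 2) (fun i => (γ i : ℂ) + (c i : ℂ) / 2)
      = ((bilin M γ γ : ℤ) : ℂ) + ((bilin M γ c : ℤ) : ℂ) / 2
        + ((bilin M c γ : ℤ) : ℂ) / 2 + ((bilin M c c : ℤ) : ℂ) / 4 := by
  simp only [bilin]
  push_cast
  simp only [Finset.sum_div, ← Finset.sum_add_distrib]
  exact Finset.sum_congr rfl fun i _ => Finset.sum_congr rfl fun j _ => by ring

private lemma bilin_right_add {ι : Type} [Fintype ι] (M : Matrix ι ι ℤ) (v x d : ι → ℂ) :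
    bilin M v (x + d) = bilin M v x + bilin M v d := by
  simp only [bilin, Pi.add_apply, mul_add, Finset.sum_add_distrib]

private lemma bilin_right_half_sub {ι : Type} [Fintype ι] (M : Matrix ι ι ℤ) (γ c w : ι → ℤ) :
    bilin M (fun i => (γ i : ℂ) + (c i : ℂ) / 2) (fun i => ((w i : ℂ) - (c i : ℂ)) / 2)
      = ((bilin M γ w : ℤ) : ℂ) / 2 - ((bilin M γ c : ℤ) : ℂ) / 2
        + ((bilin M c w : ℤ) : ℂ) / 4 - ((bilin M c c : ℤ) : ℂ) / 4 := by
  simp only [bilin]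
  push_cast
  simp only [Finset.sum_div, ← Finset.sum_add_distrib, ← Finset.sum_sub_distrib]
  exact Finset.sum_congr rfl fun i _ => Finset.sum_congr rfl fun j _ => by ring

private lemma bilin_symm {ι : Type} [Fintype ι] {M : Matrix ι ι ℤ} (hM : M.IsSymm)
    (u v : ι → ℤ) : bilin M u v = bilin M v u := by
  rw [bilin, Finset.sum_comm]
  exact Finset.sum_congr rfl fun i _ => Finset.sum_congr rfl fun j _ => by
    rw [← hM.apply i j]; ring

theorem latticeTheta_tau_add_one {ι : Type} [Fintype ι] (M : Matrix ι ι ℤ)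
    (hM : M.IsSymm) (w : ι → ℤ) (hw : ∀ v : ι → ℤ, Even (bilin M v v - bilin M v w))
    (c : ι → ℤ) (f g : ι → ℝ) (τ : ℂ) (hτ : 0 < τ.im) (x : ι → ℂ) :
    latticeTheta M f g c (τ + 1) x
      = Complex.exp (Real.pi * Complex.I *
          (3 * ((bilin M c c : ℤ) : ℂ) / 4 - ((bilin M c w : ℤ) : ℂ) / 2)) *
        latticeTheta M f g c τ (x + fun i => ((w i : ℂ) - (c i : ℂ)) / 2) := by
  unfold latticeTheta
  rw [← tsum_mul_left]
  refine tsum_congr fun γ => ?_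
  obtain ⟨m, hm⟩ := hw γ
  have key : Complex.exp (Real.pi * Complex.I * (τ + 1) *
        bilin M (fun i => (γ i : ℂ) + (c i : ℂ) / 2) (fun i => (γ i : ℂ) + (c i : ℂ) / 2)) *
      Complex.exp (2 * Real.pi * Complex.I *
        bilin M (fun i => (γ i : ℂ) + (c i : ℂ) / 2) x)
      = Complex.exp (Real.pi * Complex.I *
          (3 * ((bilin M c c : ℤ) : ℂ) / 4 - ((bilin M c w : ℤ) : ℂ) / 2)) *
        (Complex.exp (Real.pi * Complex.I * τ *
          bilin M (fun i => (γ i : ℂ) + (c i : ℂ) / 2) (fun i => (γ i : ℂ) + (c i : ℂ) / 2)) *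
        Complex.exp (2 * Real.pi * Complex.I *
          bilin M (fun i => (γ i : ℂ) + (c i : ℂ) / 2)
            (x + fun i => ((w i : ℂ) - (c i : ℂ)) / 2))) := by
    rw [← Complex.exp_add, ← Complex.exp_add, ← Complex.exp_add,
      bilin_right_add, bilin_half_expand, bilin_right_half_sub,
      bilin_symm hM c γ]
    rw [show Real.pi * Complex.I * (τ + 1) *
        (((bilin M γ γ : ℤ) : ℂ) + ((bilin M γ c : ℤ) : ℂ) / 2
          + ((bilin M γ c : ℤ) : ℂ) / 2 + ((bilin M c c : ℤ) : ℂ) / 4)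
        + 2 * Real.pi * Complex.I *
            bilin M (fun i => (γ i : ℂ) + (c i : ℂ) / 2) x
      = Real.pi * Complex.I *
          (3 * ((bilin M c c : ℤ) : ℂ) / 4 - ((bilin M c w : ℤ) : ℂ) / 2)
        + (Real.pi * Complex.I * τ *
            (((bilin M γ γ : ℤ) : ℂ) + ((bilin M γ c : ℤ) : ℂ) / 2
              + ((bilin M γ c : ℤ) : ℂ) / 2 + ((bilin M c c : ℤ) : ℂ) / 4)
          + (2 * Real.pi * Complex.I *
              (bilin M (fun i => (γ i : ℂ) + (c i : ℂ) / 2) x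
                + (((bilin M γ w : ℤ) : ℂ) / 2 - ((bilin M γ c : ℤ) : ℂ) / 2
                  + ((bilin M c w : ℤ) : ℂ) / 4 - ((bilin M c c : ℤ) : ℂ) / 4))))
        + ((m + bilin M γ c : ℤ) : ℂ) * (2 * Real.pi * Complex.I) from ?_]
    · rw [Complex.exp_add, Complex.exp_int_mul_two_pi_mul_I, mul_one]
    · have h : ((bilin M γ γ : ℤ) : ℂ)
          = ((bilin M γ w : ℤ) : ℂ) + (m : ℂ) + (m : ℂ) := by
        have : bilin M γ γ = bilin M γ w + m + m := by omega
        rw [this]; push_cast; ring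
      rw [h]; push_cast; ring
  rw [mul_assoc (charFun _ - charFun _), key]; ring
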